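/- Let d ≥ 1, let Q be a dyadic cube in ℝ^d, let 𝒫₄ be a collection of pairwise disjoint dyadic cubes contained in Q, and let M > 0. Let 𝒫₅ be the collection of maximal dyadic cubes S contained in Q which are contained in at least M distinct dyadic cubes, each of which is the parent of some cube in 𝒫₄. Then ∑_{S∈𝒫₅} |S| ≤ (2^d/M)·|Q|. In particular, if M = 2^d·ε^{−1} for some ε > 0, then ∑_{S∈𝒫₅} |S| ≤ ε|Q|. -/

import Mathlib

/-!
Distinct cubes of `𝒫₅` are disjoint by maximality. Double count the pairs `(S, T)` with
`S ∈ 𝒫₅` and `T ⊇ S` a parent of a cube of `𝒫₄`: every `S` lies in at least `M` such `T`,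
while the cubes of `𝒫₅` inside a fixed `T` have total measure at most `|T|`. Hence
`M ∑ |S| ≤ ∑ |T| = 2^d ∑ |child T| ≤ 2^d |Q|`, the last step because a dyadic cube has only
one parent, so distinct `T` have distinct, hence disjoint, children in `𝒫₄`.
-/

open MeasureTheory
open scoped ENNReal

noncomputable section

/-- A dyadic cube in `ι → ℝ`: a product of dyadic intervals `[2^m l, 2^m (l+1))`
of equal sidelength. -/
def IsDyadicCube {ι : Type*} [Fintype ι] (P : Set (ι → ℝ)) : Prop :=
  ∃ (m : ℤ) (l : ι → ℤ),
    P = Set.univ.pi fun i => Set.Ico ((2:ℝ) ^ m * (l i : ℝ)) ((2:ℝ) ^ m * ((l i : ℝ) + 1))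

/-- A dyadic test function: a finite linear combination of indicators of dyadic cubes. -/
def IsDyadicTest {ι : Type*} [Fintype ι] (f : (ι → ℝ) → ℝ) : Prop :=
  ∃ (N : ℕ) (c : Fin N → ℝ) (P : Fin N → Set (ι → ℝ)),
    (∀ i, IsDyadicCube (P i)) ∧
    f = fun x => ∑ i, c i * Set.indicator (P i) (fun _ => (1:ℝ)) x

/-- `P'` is a dyadic child of `P`: a dyadic subcube of half the sidelength. -/
def IsDyadicChild {ι : Type*} [Fintype ι] (P' P : Set (ι → ℝ)) : Prop :=
  IsDyadicCube P' ∧ IsDyadicCube P ∧ P' ⊆ P ∧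
    volume P = 2 ^ (Fintype.card ι) * volume P'

/-- The `L^p` norm (valued in `ℝ≥0∞`). -/
def lpNorm {ι : Type*} [Fintype ι] (p : ℝ) (f : (ι → ℝ) → ℝ) : ℝ≥0∞ :=
  eLpNorm f (ENNReal.ofReal p) volume

/-- The `L^p` norm (real-valued). -/
def lpNormR {ι : Type*} [Fintype ι] (p : ℝ) (f : (ι → ℝ) → ℝ) : ℝ :=
  (eLpNorm f (ENNReal.ofReal p) volume).toReal

/-- A Hölder tuple of exponents: `1 < p j < ∞` with `∑ 1/p j = 1`. -/
def IsHolderTuple {n : ℕ} (p : Fin n → ℝ) : Prop :=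
  (∀ j, 1 < p j) ∧ ∑ j, 1 / p j = 1

/-- A perfect `n`-linear Calderón–Zygmund form on `ℝ^d`. -/
structure IsPerfectCZForm (d n : ℕ)
    (Λ : MultilinearMap ℝ (fun _ : Fin n => (Fin d → ℝ) → ℝ) ℝ) : Prop where
  /-- Dyadic decay. -/
  decay : ∀ p : Fin n → ℝ, IsHolderTuple p →
    ∀ P : Set (Fin d → ℝ), IsDyadicCube P →
    ∀ f : Fin n → (Fin d → ℝ) → ℝ,
      (∀ j, IsDyadicTest (f j)) →
      (∀ j, Function.support (f j) ⊆ P) →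
      (∃ i j : Fin n, i ≠ j ∧ ∃ Pi Pj : Set (Fin d → ℝ),
        IsDyadicChild Pi P ∧ IsDyadicChild Pj P ∧ Pi ≠ Pj ∧
        Function.support (f i) ⊆ Pi ∧ Function.support (f j) ⊆ Pj) →
      ENNReal.ofReal |Λ f| ≤ ∏ j, lpNorm (p j) (f j)
  /-- Perfect smoothness. -/
  smooth : ∀ f : Fin n → (Fin d → ℝ) → ℝ, (∀ j, IsDyadicTest (f j)) →
    ∀ P : Set (Fin d → ℝ), IsDyadicCube P →
    ∀ i j : Fin n, i ≠ j →
      Function.support (f j) ⊆ P → (∫ x, f j x) = 0 →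
      (∀ x ∈ P, f i x = 0) → Λ f = 0
  /-- Qualitative truncation: the kernel is a dyadic test function on `ℝ^{dn}`. -/
  trunc : ∃ K : (Fin n × Fin d → ℝ) → ℝ, IsDyadicTest K ∧
    ∀ f : Fin n → (Fin d → ℝ) → ℝ, (∀ j, IsDyadicTest (f j)) →
      Λ f = ∫ x : Fin n × Fin d → ℝ, K x * ∏ j, f j (fun i => x (j, i))


/-- `S` is contained in at least `M` distinct dyadic cubes, each of which is the parent
of some cube in the collection `P4`. -/
def ManyParents (d : ℕ) (P4 : Set (Set (Fin d → ℝ))) (M : ℝ) (S : Set (Fin d → ℝ)) : Prop :=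
  ∃ 𝒯 : Finset (Set (Fin d → ℝ)), M ≤ (𝒯.card : ℝ) ∧
    ∀ T ∈ 𝒯, IsDyadicCube T ∧ S ⊆ T ∧ ∃ P ∈ P4, IsDyadicChild P T

def dyadicInterval (m l : ℤ) : Set ℝ := Set.Ico ((2:ℝ) ^ m * l) ((2:ℝ) ^ m * (l + 1))

theorem mem_dyadicInterval_iff {m l : ℤ} {x : ℝ} : x ∈ dyadicInterval m l ↔ ⌊x / 2 ^ m⌋ = l := by
  have h : (0:ℝ) < 2 ^ m := by positivity
  rw [Int.floor_eq_iff, le_div_iff₀ h, div_lt_iff₀ h, mul_comm, mul_comm _ (2 ^ m : ℝ)]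
  rfl

theorem dyadicInterval_subset_add (m l : ℤ) (k : ℕ) :
    dyadicInterval m l ⊆ dyadicInterval (m + k) (l / 2 ^ k) := by
  intro y hy
  rw [mem_dyadicInterval_iff] at hy ⊢
  rw [zpow_add₀ two_ne_zero, zpow_natCast, ← div_div, ← hy]
  exact_mod_cast Int.floor_div_natCast (y / 2 ^ m) (2 ^ k)

theorem dyadicInterval_subset_of_le {m m' l l' : ℤ} {x : ℝ} (hm : m ≤ m')
    (hx : x ∈ dyadicInterval m l) (hx' : x ∈ dyadicInterval m' l') :
    dyadicInterval m l ⊆ dyadicInterval m' l' := by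
  obtain ⟨k, rfl⟩ := Int.exists_add_of_le hm
  have hl' : l' = l / 2 ^ k := by
    rw [mem_dyadicInterval_iff] at hx'
    rw [← hx', ← mem_dyadicInterval_iff]
    exact dyadicInterval_subset_add m l k hx
  exact hl' ▸ dyadicInterval_subset_add m l k

section DyadicCube

variable {ι : Type*}

def dyadicCube (m : ℤ) (l : ι → ℤ) : Set (ι → ℝ) := Set.univ.pi fun i => dyadicInterval m (l i)

theorem isDyadicCube_iff [Fintype ι] {P : Set (ι → ℝ)} :
    IsDyadicCube P ↔ ∃ m l, P = dyadicCube m l :=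
  Iff.rfl

theorem volume_dyadicCube [Fintype ι] (m : ℤ) (l : ι → ℤ) :
    volume (dyadicCube m l) = ENNReal.ofReal (((2:ℝ) ^ m) ^ Fintype.card ι) := by
  have h : (0:ℝ) ≤ 2 ^ m := by positivity
  simp only [dyadicCube, dyadicInterval, volume_pi_pi, Real.volume_Ico, mul_add, mul_one,
    add_sub_cancel_left, Finset.prod_const, Finset.card_univ, ENNReal.ofReal_pow h]

theorem dyadicCube_subset_of_le {m m' : ℤ} {l l' : ι → ℤ} {x : ι → ℝ} (hm : m ≤ m')
    (hx : x ∈ dyadicCube m l) (hx' : x ∈ dyadicCube m' l') : dyadicCube m l ⊆ dyadicCube m' l' :=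
  Set.pi_mono fun i _ => dyadicInterval_subset_of_le hm (hx i trivial) (hx' i trivial)

theorem eq_of_mem_dyadicCube {m : ℤ} {l l' : ι → ℤ} {x : ι → ℝ}
    (hx : x ∈ dyadicCube m l) (hx' : x ∈ dyadicCube m l') : l = l' := by
  funext i
  rw [← mem_dyadicInterval_iff.mp (hx i trivial), mem_dyadicInterval_iff.mp (hx' i trivial)]

end DyadicCube

namespace IsDyadicCube

variable {ι : Type*} [Fintype ι] {P P' : Set (ι → ℝ)}

theorem measurableSet (hP : IsDyadicCube P) : MeasurableSet P := by
  obtain ⟨m, l, rfl⟩ := isDyadicCube_iff.mp hP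
  exact MeasurableSet.univ_pi fun _ => measurableSet_Ico

theorem nonempty (hP : IsDyadicCube P) : P.Nonempty := by
  obtain ⟨m, l, rfl⟩ := isDyadicCube_iff.mp hP
  refine ⟨fun i => 2 ^ m * l i, fun i _ => mem_dyadicInterval_iff.mpr ?_⟩
  rw [mul_div_cancel_left₀ _ (by positivity), Int.floor_intCast]

theorem subset_or_subset_of_not_disjoint (hP : IsDyadicCube P) (hP' : IsDyadicCube P')
    (h : ¬Disjoint P P') : P ⊆ P' ∨ P' ⊆ P := by
  obtain ⟨x, hx, hx'⟩ := Set.not_disjoint_iff.mp h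
  obtain ⟨m, l, rfl⟩ := isDyadicCube_iff.mp hP
  obtain ⟨m', l', rfl⟩ := isDyadicCube_iff.mp hP'
  rcases le_total m m' with hm | hm
  · exact .inl (dyadicCube_subset_of_le hm hx hx')
  · exact .inr (dyadicCube_subset_of_le hm hx' hx)

theorem eq_of_volume_eq_of_not_disjoint (hP : IsDyadicCube P) (hP' : IsDyadicCube P')
    (h : ¬Disjoint P P') (hvol : volume P = volume P') : P = P' := by
  obtain ⟨x, hx, hx'⟩ := Set.not_disjoint_iff.mp h
  rcases isEmpty_or_nonempty ι with _ | _
  · rw [Set.Nonempty.eq_univ ⟨x, hx⟩, Set.Nonempty.eq_univ ⟨x, hx'⟩]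
  obtain ⟨m, l, rfl⟩ := isDyadicCube_iff.mp hP
  obtain ⟨m', l', rfl⟩ := isDyadicCube_iff.mp hP'
  have hm : m = m' := by
    rw [volume_dyadicCube, volume_dyadicCube,
      ENNReal.ofReal_eq_ofReal_iff (by positivity) (by positivity),
      pow_left_inj₀ (by positivity) (by positivity) Fintype.card_ne_zero] at hvol
    exact zpow_right_injective₀ two_pos (by norm_num) hvol
  subst hm
  rw [eq_of_mem_dyadicCube hx hx']

end IsDyadicCube

theorem IsDyadicChild.parent_unique {ι : Type*} [Fintype ι] {P T T' : Set (ι → ℝ)}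
    (h : IsDyadicChild P T) (h' : IsDyadicChild P T') : T = T' := by
  obtain ⟨hP, hT, hPT, hvol⟩ := h
  obtain ⟨-, hT', hPT', hvol'⟩ := h'
  obtain ⟨x, hx⟩ := hP.nonempty
  exact hT.eq_of_volume_eq_of_not_disjoint hT'
    (Set.not_disjoint_iff.mpr ⟨x, hPT hx, hPT' hx⟩) (hvol.trans hvol'.symm)

theorem pairwiseDisjoint_maximal_isDyadicCube {ι : Type*} [Fintype ι] (Q : Set (ι → ℝ))
    (p : Set (ι → ℝ) → Prop) :
    {S | IsDyadicCube S ∧ S ⊆ Q ∧ p S ∧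
      ∀ S', IsDyadicCube S' → S ⊂ S' → S' ⊆ Q → ¬ p S'}.PairwiseDisjoint id := by
  rintro S ⟨hS, hSQ, hpS, hSmax⟩ S' ⟨hS', hS'Q, hpS', hS'max⟩ hne
  by_contra h
  rcases hS.subset_or_subset_of_not_disjoint hS' h with hsub | hsub
  · exact hSmax S' hS' (hsub.ssubset_of_ne hne) hS'Q hpS'
  · exact hS'max S hS (hsub.ssubset_of_ne hne.symm) hSQ hpS

section Measure

variable {α : Type*} [MeasurableSpace α] (μ : Measure α) {𝒮 𝒯 : Set (Set α)}

theorem tsum_measure_le_of_pairwiseDisjoint (h𝒮 : 𝒮.PairwiseDisjoint id)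
    (h𝒮m : ∀ S ∈ 𝒮, MeasurableSet S) {T : Set α} (hT : ∀ S ∈ 𝒮, S ⊆ T) :
    ∑' S : 𝒮, μ S ≤ μ T :=
  (tsum_meas_le_meas_iUnion_of_disjoint μ (As := fun S : 𝒮 => (S : Set α)) (fun S => h𝒮m S S.2)
    fun S S' hne => h𝒮 S.2 S'.2 (Subtype.coe_injective.ne hne)).trans
    (measure_mono (Set.iUnion_subset fun S => hT S S.2))

open Classical in
theorem mul_tsum_measure_le_tsum_measure (h𝒮 : 𝒮.PairwiseDisjoint id)
    (h𝒮m : ∀ S ∈ 𝒮, MeasurableSet S) {c : ℝ≥0∞}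
    (hc : ∀ S ∈ 𝒮, ∃ F : Finset (Set α), c ≤ F.card ∧ ∀ T ∈ F, T ∈ 𝒯 ∧ S ⊆ T) :
    c * ∑' S : 𝒮, μ S ≤ ∑' T : 𝒯, μ T := by
  have hcount (S : Set α) (hS : S ∈ 𝒮) :
      c * μ S ≤ ∑' T : 𝒯, if S ⊆ T then μ S else 0 := by
    obtain ⟨F, hcF, hF⟩ := hc S hS
    calc c * μ S ≤ F.card * μ S := by gcongr
      _ = ∑ T ∈ F, 𝒯.indicator (fun T => if S ⊆ T then μ S else 0) T := by
          rw [Finset.sum_congr rfl fun T hT => ?_, Finset.sum_const, nsmul_eq_mul]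
          rw [Set.indicator_of_mem (hF T hT).1, if_pos (hF T hT).2]
      _ ≤ _ := by
          rw [tsum_subtype 𝒯 (fun T => if S ⊆ T then μ S else 0)]
          exact ENNReal.sum_le_tsum F
  have hinside (T : Set α) : ∑' S : 𝒮, (if (S : Set α) ⊆ T then μ S else 0) ≤ μ T := by
    calc ∑' S : 𝒮, (if (S : Set α) ⊆ T then μ S else 0)
        = ∑' S : ↥{S ∈ 𝒮 | S ⊆ T}, μ S := by
          rw [tsum_subtype 𝒮 (fun S => if S ⊆ T then μ S else 0), tsum_subtype]
          congr 1 with S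
          by_cases hS : S ∈ 𝒮 <;> by_cases hST : S ⊆ T <;> simp [hS, hST]
      _ ≤ μ T := tsum_measure_le_of_pairwiseDisjoint μ (h𝒮.subset fun _ hS => hS.1)
          (fun S hS => h𝒮m S hS.1) fun _ hS => hS.2
  calc c * ∑' S : 𝒮, μ S
      = ∑' S : 𝒮, c * μ S := ENNReal.tsum_mul_left.symm
    _ ≤ ∑' (S : 𝒮) (T : 𝒯), if (S : Set α) ⊆ T then μ S else 0 :=
        ENNReal.tsum_le_tsum fun S => hcount S S.2
    _ = ∑' (T : 𝒯) (S : 𝒮), if (S : Set α) ⊆ T then μ S else 0 := ENNReal.tsum_comm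
    _ ≤ ∑' T : 𝒯, μ T := ENNReal.tsum_le_tsum fun T => hinside T

end Measure

def dyadicParents {ι : Type*} [Fintype ι] (𝒞 : Set (Set (ι → ℝ))) : Set (Set (ι → ℝ)) :=
  {T | ∃ P ∈ 𝒞, IsDyadicChild P T}

theorem tsum_volume_dyadicParents_le {ι : Type*} [Fintype ι] {𝒞 : Set (Set (ι → ℝ))}
    (h𝒞 : 𝒞.PairwiseDisjoint id) :
    ∑' T : dyadicParents 𝒞, volume (T : Set (ι → ℝ)) ≤
      2 ^ Fintype.card ι * volume (⋃₀ 𝒞) := by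
  choose child hchild𝒞 hchild using fun T : dyadicParents 𝒞 => T.2
  have hdisj : Pairwise (Function.onFun Disjoint child) := fun T T' hne =>
    h𝒞 (hchild𝒞 T) (hchild𝒞 T') fun h =>
      hne (Subtype.ext ((hchild T).parent_unique (h ▸ hchild T')))
  calc ∑' T : dyadicParents 𝒞, volume (T : Set (ι → ℝ))
      = ∑' T, 2 ^ Fintype.card ι * volume (child T) := tsum_congr fun T => (hchild T).2.2.2
    _ = 2 ^ Fintype.card ι * ∑' T, volume (child T) := ENNReal.tsum_mul_left
    _ ≤ 2 ^ Fintype.card ι * volume (⋃ T, child T) := by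
        gcongr
        exact tsum_meas_le_meas_iUnion_of_disjoint _ (fun T => (hchild T).1.measurableSet) hdisj
    _ ≤ 2 ^ Fintype.card ι * volume (⋃₀ 𝒞) := by
        gcongr
        exact Set.iUnion_subset fun T => Set.subset_sUnion_of_mem (hchild𝒞 T)

theorem stopping_time_manyParents_general (d : ℕ)
    (Q : Set (Fin d → ℝ))
    (P4 : Set (Set (Fin d → ℝ)))
    (hP4 : ∀ P ∈ P4, IsDyadicCube P ∧ P ⊆ Q)
    (hP4disj : P4.Pairwise fun A C => Disjoint A C)
    (M : ℝ) (hM : 0 < M)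
    (P5 : Set (Set (Fin d → ℝ)))
    (hP5 : P5 = {S | IsDyadicCube S ∧ S ⊆ Q ∧ ManyParents d P4 M S ∧
      ∀ S' : Set (Fin d → ℝ), IsDyadicCube S' → S ⊂ S' → S' ⊆ Q →
        ¬ ManyParents d P4 M S'}) :
    (∑' S : P5, volume (S : Set (Fin d → ℝ)) ≤
        ENNReal.ofReal ((2 ^ d : ℝ) / M) * volume Q) ∧
      ∀ ε : ℝ, 0 < ε → M = 2 ^ d * ε⁻¹ →
        ∑' S : P5, volume (S : Set (Fin d → ℝ)) ≤ ENNReal.ofReal ε * volume Q := by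
  have hP5disj : P5.PairwiseDisjoint id := hP5 ▸ pairwiseDisjoint_maximal_isDyadicCube Q _
  have hP5meas (S) (hS : S ∈ P5) : MeasurableSet S := (hP5 ▸ hS).1.measurableSet
  have hP5parents (S) (hS : S ∈ P5) : ∃ F : Finset (Set (Fin d → ℝ)),
      ENNReal.ofReal M ≤ F.card ∧ ∀ T ∈ F, T ∈ dyadicParents P4 ∧ S ⊆ T := by
    obtain ⟨-, -, ⟨F, hMF, hF⟩, -⟩ := hP5 ▸ hS
    exact ⟨F, by simpa using ENNReal.ofReal_le_ofReal hMF,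
      fun T hT => ⟨(hF T hT).2.2, (hF T hT).2.1⟩⟩
  have key : ENNReal.ofReal M * ∑' S : P5, volume (S : Set (Fin d → ℝ)) ≤ 2 ^ d * volume Q :=
    calc _ ≤ ∑' T : dyadicParents P4, volume (T : Set (Fin d → ℝ)) :=
          mul_tsum_measure_le_tsum_measure volume hP5disj hP5meas hP5parents
      _ ≤ 2 ^ d * volume (⋃₀ P4) := by simpa using tsum_volume_dyadicParents_le hP4disj
      _ ≤ 2 ^ d * volume Q := by gcongr; exact Set.sUnion_subset fun P hP => (hP4 P hP).2
  have hbound : ∑' S : P5, volume (S : Set (Fin d → ℝ)) ≤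
      ENNReal.ofReal ((2 ^ d : ℝ) / M) * volume Q := by
    rw [ENNReal.ofReal_div_of_pos hM, ← ENNReal.mul_div_right_comm,
      ENNReal.le_div_iff_mul_le (.inl (by simpa)) (.inl ENNReal.ofReal_ne_top), mul_comm]
    simpa using key
  refine ⟨hbound, fun ε _ hMε => ?_⟩
  have hε : (2 ^ d : ℝ) / M = ε := by rw [hMε]; field_simp
  rwa [hε] at hbound

/-- The stopping-time estimate corresponding to `𝒫₅`: if `𝒫₄` is a pairwise disjoint
collection of dyadic cubes in `Q`, and `𝒫₅` is the collection of maximal dyadic cubes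
`S ⊆ Q` contained in at least `M` distinct dyadic cubes which are parents of cubes in
`𝒫₄`, then `∑_{S∈𝒫₅} |S| ≤ (2^d/M) |Q|`; in particular, if `M = 2^d ε⁻¹` then
`∑_{S∈𝒫₅} |S| ≤ ε |Q|`. -/
theorem stopping_time_manyParents (d : ℕ) (hd : 1 ≤ d)
    (Q : Set (Fin d → ℝ)) (hQ : IsDyadicCube Q)
    (P4 : Set (Set (Fin d → ℝ)))
    (hP4 : ∀ P ∈ P4, IsDyadicCube P ∧ P ⊆ Q)
    (hP4disj : P4.Pairwise fun A C => Disjoint A C)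
    (M : ℝ) (hM : 0 < M)
    (P5 : Set (Set (Fin d → ℝ)))
    (hP5 : P5 = {S | IsDyadicCube S ∧ S ⊆ Q ∧ ManyParents d P4 M S ∧
      ∀ S' : Set (Fin d → ℝ), IsDyadicCube S' → S ⊂ S' → S' ⊆ Q →
        ¬ ManyParents d P4 M S'}) :
    (∑' S : P5, volume (S : Set (Fin d → ℝ)) ≤
        ENNReal.ofReal ((2 ^ d : ℝ) / M) * volume Q) ∧
      ∀ ε : ℝ, 0 < ε → M = 2 ^ d * ε⁻¹ →
        ∑' S : P5, volume (S : Set (Fin d → ℝ)) ≤ ENNReal.ofReal ε * volume Q :=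
  stopping_time_manyParents_general d Q P4 hP4 hP4disj M hM P5 hP5

end
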